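/- arXiv:2307.12939 — 5 statements merged into one kernel-verified Lean document; each statement's English description precedes it below -/
import Mathlib

section
/- Let φ : S¹ → S¹ be a continuous involution with no fixed points. Then φ is monotone, i.e. any lift φ̂ : ℝ → ℝ of φ (through the covering ℝ → ℝ/ℤ = S¹) is a strictly monotone (increasing) map; equivalently φ is orientation-preserving. -/
/-!
`φ̂ ∘ φ̂ - id` is a continuous lift of `φ ∘ φ = id`, so it takes integer values and is
therefore constant; hence `φ̂` is injective, and being continuous it is strictly monotone or
strictly antitone. If it were antitone, `x ↦ φ̂ x - x` would drop by more than `1` on `[0, 1]`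
and so hit an integer, i.e. `φ` would have a fixed point.
-/

open Set Function

lemma AddCircle.coe_eq_coe_iff_sub_mem_range_intCast {x y : ℝ} :
    (x : AddCircle (1 : ℝ)) = y ↔ x - y ∈ range ((↑) : ℤ → ℝ) := by
  rw [← sub_eq_zero, ← AddCircle.coe_sub, AddCircle.coe_eq_zero_iff]
  simp [eq_comm]

lemma Continuous.eq_of_forall_mem_range_intCast {α : Type*} [TopologicalSpace α]
    [PreconnectedSpace α] {f : α → ℝ} (hf : Continuous f)
    (hint : ∀ x, f x ∈ range ((↑) : ℤ → ℝ)) (x y : α) : f x = f y :=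
  isPreconnected_univ.constant_of_mapsTo Int.isClosedEmbedding_coe_real.isInducing.isDiscrete_range
    hf.continuousOn (fun z _ ↦ hint z) trivial trivial

section LiftOfInvolution

variable {φ : AddCircle (1 : ℝ) → AddCircle (1 : ℝ)} {f : ℝ → ℝ}

lemma lift_comp_lift_sub_mem_range_intCast (hinv : Involutive φ)
    (hlift : ∀ x : ℝ, (f x : AddCircle (1 : ℝ)) = φ x) (x : ℝ) :
    f (f x) - x ∈ range ((↑) : ℤ → ℝ) := by
  rw [← AddCircle.coe_eq_coe_iff_sub_mem_range_intCast, hlift, hlift, hinv]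

lemma injective_of_lift_involutive (hinv : Involutive φ) (hf : Continuous f)
    (hlift : ∀ x : ℝ, (f x : AddCircle (1 : ℝ)) = φ x) : Injective f := by
  have hconst : ∀ x, f (f x) - x = f (f 0) - 0 := fun x ↦
    ((hf.comp hf).sub continuous_id).eq_of_forall_mem_range_intCast
      (lift_comp_lift_sub_mem_range_intCast hinv hlift) x 0
  intro a b hab
  linarith [hconst a, hconst b, congrArg f hab]

end LiftOfInvolution

lemma exists_coe_eq_of_antitone {f : ℝ → ℝ} (hf : Continuous f) (hanti : Antitone f) :
    ∃ x : ℝ, (f x : AddCircle (1 : ℝ)) = x := by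
  set g : ℝ → ℝ := fun x ↦ f x - x
  have hdrop : g 1 ≤ g 0 - 1 := by
    have := hanti zero_le_one
    simp only [g]
    linarith
  have hmem : (⌊g 0⌋ : ℝ) ∈ Icc (g 1) (g 0) :=
    ⟨by linarith [Int.sub_one_lt_floor (g 0)], Int.floor_le _⟩
  obtain ⟨x, -, hx⟩ :=
    intermediate_value_Icc' zero_le_one ((hf.sub continuous_id).continuousOn) hmem
  exact ⟨x, AddCircle.coe_eq_coe_iff_sub_mem_range_intCast.mpr ⟨_, hx.symm⟩⟩

theorem continuous_involution_no_fixed_points_lift_strictMono_general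
    (φ : AddCircle (1:ℝ) → AddCircle (1:ℝ))
    (hinv : ∀ x, φ (φ x) = x)
    (hnofix : ∀ x, φ x ≠ x)
    (φhat : ℝ → ℝ)
    (hφhat : Continuous φhat)
    (hlift : ∀ x : ℝ, ((φhat x : ℝ) : AddCircle (1:ℝ)) = φ ((x : ℝ) : AddCircle (1:ℝ))) :
    StrictMono φhat := by
  refine (hφhat.strictMono_of_inj (injective_of_lift_involutive hinv hφhat hlift)).resolve_right ?_
  intro hanti
  obtain ⟨x, hx⟩ := exists_coe_eq_of_antitone hφhat hanti.antitone
  exact hnofix x (by rw [← hlift, hx])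

/-- A continuous involution of the circle ℝ/ℤ without fixed points is monotone:
any continuous lift `φ̂ : ℝ → ℝ` of `φ` through the covering ℝ → ℝ/ℤ is
strictly increasing. -/
theorem continuous_involution_no_fixed_points_lift_strictMono
    (φ : AddCircle (1:ℝ) → AddCircle (1:ℝ))
    (hcont : Continuous φ)
    (hinv : ∀ x, φ (φ x) = x)
    (hnofix : ∀ x, φ x ≠ x)
    (φhat : ℝ → ℝ)
    (hφhat : Continuous φhat)
    (hlift : ∀ x : ℝ, ((φhat x : ℝ) : AddCircle (1:ℝ)) = φ ((x : ℝ) : AddCircle (1:ℝ))) :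
    StrictMono φhat :=
  continuous_involution_no_fixed_points_lift_strictMono_general φ hinv hnofix φhat hφhat hlift
end

section
/- Let φ : S¹ → S¹ be a continuous involution with no fixed points. Then there cannot exist a point p ∈ S¹ such that one of the two closed arcs of S¹ determined by {p, φ(p)} contains both q and φ(q) in its interior for some q. (Equivalently: for all q ≠ p with q ≠ φ(p), the points q and φ(q) lie in different open arcs of S¹ \ {p, φ(p)}.) -/
/-!
If `q` and `φ q` lay in the same component `C` of `S¹ \ {p, φ p}`, then `φ` would map the
preconnected set `C` into itself. Cutting the circle at `p` gives a continuous injective real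
coordinate `e` on `C`, and `e ∘ φ - e` takes opposite values at `q` and `φ q`; by the
intermediate value theorem it vanishes somewhere on `C`, which is a fixed point of `φ`.
-/

open Set Function

theorem Function.Involutive.mapsTo_compl_pair {α : Type*} {φ : α → α} (hφ : Involutive φ)
    (p : α) : MapsTo φ {p, φ p}ᶜ {p, φ p}ᶜ := by
  intro x hx
  simp only [mem_compl_iff, mem_insert_iff, mem_singleton_iff, not_or] at hx ⊢
  exact ⟨fun h => hx.2 (by rw [← h, hφ]), fun h => hx.1 (hφ.injective h)⟩

theorem mapsTo_connectedComponentIn {X : Type*} [TopologicalSpace X] {φ : X → X} {U : Set X}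
    {x : X} (hφ : ContinuousOn φ U) (hU : MapsTo φ U U)
    (hx : connectedComponentIn U (φ x) = connectedComponentIn U x) :
    MapsTo φ (connectedComponentIn U x) (connectedComponentIn U x) := by
  intro y hy
  have hxU : x ∈ U := connectedComponentIn_nonempty_iff.1 ⟨y, hy⟩
  have hCU := connectedComponentIn_subset U x
  have himage : φ '' connectedComponentIn U x ⊆ connectedComponentIn U (φ x) :=
    (isPreconnected_connectedComponentIn.image φ (hφ.mono hCU)).subset_connectedComponentIn
      (mem_image_of_mem φ (mem_connectedComponentIn hxU)) (hU.mono_left hCU).image_subset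
  exact hx ▸ himage (mem_image_of_mem φ hy)

theorem IsPreconnected.exists_fixedPoint_of_involutive {X : Type*} [TopologicalSpace X]
    {C : Set X} (hC : IsPreconnected C) (hCne : C.Nonempty) {φ : X → X} (hinv : Involutive φ)
    (hφ : ContinuousOn φ C) (hmaps : MapsTo φ C C) {e : X → ℝ} (he : ContinuousOn e C)
    (he_inj : InjOn e C) : ∃ x ∈ C, φ x = x := by
  obtain ⟨q, hq⟩ := hCne
  set F : X → ℝ := fun x => e (φ x) - e x
  have hF : ContinuousOn F C := (he.comp hφ hmaps).sub he
  have hFφ : F (φ q) = -F q := by simp only [F, hinv q, neg_sub]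
  obtain ⟨x, hx, hFx⟩ : ∃ x ∈ C, F x = 0 := by
    rcases le_total (F q) 0 with hneg | hpos
    · exact hC.intermediate_value hq (hmaps hq) hF ⟨hneg, by linarith⟩
    · exact hC.intermediate_value (hmaps hq) hq hF ⟨by linarith, hpos⟩
  exact ⟨x, hx, he_inj (hmaps hx) hx (sub_eq_zero.1 hFx)⟩

theorem AddCircle.exists_injective_continuousOn_compl_singleton {T : ℝ} [Fact (0 < T)]
    (p : AddCircle T) : ∃ e : AddCircle T → ℝ, Injective e ∧ ContinuousOn e {p}ᶜ := by
  obtain ⟨a, rfl⟩ := QuotientAddGroup.mk_surjective p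
  refine ⟨fun x => equivIoc T a x, Subtype.val_injective.comp (equivIoc T a).injective,
    fun x hx => ?_⟩
  exact (continuous_subtype_val.continuousAt.comp (continuousAt_equivIoc T a hx)).continuousWithinAt

/-- For a continuous fixed-point-free involution φ of the circle, for any point p and
any q different from p and φ(p), the points q and φ(q) lie in different connected
components (open arcs) of S¹ \ {p, φ(p)}. -/
theorem involution_separates_arcs
    (φ : AddCircle (1:ℝ) → AddCircle (1:ℝ))
    (hcont : Continuous φ)
    (hinv : ∀ x, φ (φ x) = x)
    (hnofix : ∀ x, φ x ≠ x)
    (p q : AddCircle (1:ℝ))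
    (hq1 : q ≠ p) (hq2 : q ≠ φ p) :
    connectedComponentIn ({p, φ p} : Set (AddCircle (1:ℝ)))ᶜ q ≠
      connectedComponentIn ({p, φ p} : Set (AddCircle (1:ℝ)))ᶜ (φ q) := by
  intro h
  have hq : q ∈ ({p, φ p} : Set (AddCircle (1:ℝ)))ᶜ := by simp [hq1, hq2]
  have hC_ne_p : connectedComponentIn {p, φ p}ᶜ q ⊆ {p}ᶜ :=
    (connectedComponentIn_subset _ q).trans
      (compl_subset_compl.2 (singleton_subset_iff.2 (mem_insert _ _)))
  obtain ⟨e, he_inj, he_cont⟩ := AddCircle.exists_injective_continuousOn_compl_singleton p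
  obtain ⟨x, -, hx⟩ := isPreconnected_connectedComponentIn.exists_fixedPoint_of_involutive
    ⟨q, mem_connectedComponentIn hq⟩ hinv hcont.continuousOn
    (mapsTo_connectedComponentIn hcont.continuousOn (Involutive.mapsTo_compl_pair hinv p) h.symm)
    (he_cont.mono hC_ne_p) he_inj.injOn
  exact hnofix x hx
end

section
/- Let Γ be a closed curve of length L in a geodesic metric space such that diam(Γ) = L/2. Then there exist two points p, q ∈ Γ dividing Γ into two arcs, each of which is a geodesic (i.e., an isometric embedding / shortest path) of length L/2 joining p and q. -/
/-!
A 1-Lipschitz periodic curve of period `L` has compact range, so its diameter `L / 2` is realised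
by two parameters `a ≤ b < a + L`. Going around the curve either way gives
`L / 2 ≤ b - a` and `L / 2 ≤ a + L - b`, forcing `b = a + L / 2`. Each of the two arcs then has
length equal to the distance of its endpoints, and a 1-Lipschitz path with this property is
an isometry on every subinterval, by the triangle inequality.
-/

open Metric Set Function

theorem IsCompact.exists_dist_eq_diam {M : Type*} [PseudoMetricSpace M] {s : Set M}
    (hs : IsCompact s) (hne : s.Nonempty) : ∃ x ∈ s, ∃ y ∈ s, dist x y = diam s := by
  obtain ⟨⟨x, y⟩, ⟨hx, hy⟩, hmax⟩ := (hs.prod hs).exists_isMaxOn (hne.prod hne)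
    (continuous_fst.dist continuous_snd).continuousOn
  refine ⟨x, hx, y, hy, le_antisymm (dist_le_diam_of_mem hs.isBounded hx hy) ?_⟩
  exact diam_le_of_forall_dist_le dist_nonneg fun x' hx' y' hy' => hmax (mk_mem_prod hx' hy')

theorem Function.Periodic.exists_dist_eq_diam_range {M : Type*} [PseudoMetricSpace M]
    {γ : ℝ → M} {L : ℝ} (hper : Periodic γ L) (hL : 0 < L) (hγ : Continuous γ) :
    ∃ a b, a ≤ b ∧ b ≤ a + L ∧ dist (γ a) (γ b) = diam (range γ) := by
  obtain ⟨_, ⟨a, rfl⟩, _, ⟨b, rfl⟩, hd⟩ :=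
    (hper.compact_of_continuous hL.ne' hγ).exists_dist_eq_diam (range_nonempty γ)
  obtain ⟨b', ⟨hab', hb'⟩, hb⟩ := hper.exists_mem_Ico hL b a
  exact ⟨a, b', hab', hb'.le, hb ▸ hd⟩

namespace LipschitzWith

variable {M : Type*} [PseudoMetricSpace M] {γ : ℝ → M}

theorem dist_le_sub_of_le (hγ : LipschitzWith 1 γ) {t u : ℝ} (htu : t ≤ u) :
    dist (γ t) (γ u) ≤ u - t := by
  simpa [Real.dist_eq, abs_of_nonpos (sub_nonpos.2 htu)] using hγ.dist_le_mul t u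

theorem dist_eq_sub_of_dist_eq_sub (hγ : LipschitzWith 1 γ) {a b t u : ℝ}
    (hab : dist (γ a) (γ b) = b - a) (hat : a ≤ t) (htu : t ≤ u) (hub : u ≤ b) :
    dist (γ t) (γ u) = u - t := by
  have := dist_triangle4 (γ a) (γ t) (γ u) (γ b)
  linarith [hγ.dist_le_sub_of_le hat, hγ.dist_le_sub_of_le htu, hγ.dist_le_sub_of_le hub]

theorem eq_add_half_of_periodic_of_dist_eq_half (hγ : LipschitzWith 1 γ) {L a b : ℝ}
    (hper : Periodic γ L) (hab : a ≤ b) (hba : b ≤ a + L) (hd : dist (γ a) (γ b) = L / 2) :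
    b = a + L / 2 := by
  have hback := hγ.dist_le_sub_of_le hba
  rw [hper, dist_comm, hd] at hback
  linarith [hγ.dist_le_sub_of_le hab]

end LipschitzWith

theorem diam_eq_half_length_arcs_minimising_general
    {M : Type*} [MetricSpace M]
    (L : ℝ) (hL : 0 < L)
    (γ : ℝ → M)
    (hper : ∀ s, γ (s + L) = γ s)
    (hlip : LipschitzWith 1 γ)
    (hdiam : Metric.diam (Set.range γ) = L / 2) :
    ∃ s : ℝ, dist (γ s) (γ (s + L / 2)) = L / 2 ∧
      (∀ t u : ℝ, s ≤ t → t ≤ u → u ≤ s + L / 2 → dist (γ t) (γ u) = u - t) ∧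
      (∀ t u : ℝ, s + L / 2 ≤ t → t ≤ u → u ≤ s + L → dist (γ t) (γ u) = u - t) := by
  obtain ⟨a, b, hab, hba, hd⟩ := Periodic.exists_dist_eq_diam_range hper hL hlip.continuous
  rw [hdiam] at hd
  obtain rfl := hlip.eq_add_half_of_periodic_of_dist_eq_half hper hab hba hd
  have hfirst : dist (γ a) (γ (a + L / 2)) = a + L / 2 - a := by rw [hd]; ring
  have hsecond : dist (γ (a + L / 2)) (γ (a + L)) = a + L - (a + L / 2) := by
    rw [hper, dist_comm, hd]; ring
  exact ⟨a, hd, fun _ _ => hlip.dist_eq_sub_of_dist_eq_sub hfirst,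
    fun _ _ => hlip.dist_eq_sub_of_dist_eq_sub hsecond⟩

/-- Let γ : ℝ → M be an L-periodic arclength-parametrized closed curve in a complete
geodesic metric space (encoded here by completeness and existence of midpoints), and
assume diam(Γ) = L/2. Then there are two points p = γ(s), q = γ(s + L/2) dividing the
curve into two arcs, each of which is minimising (an isometric / shortest path) of
length L/2. -/
theorem diam_eq_half_length_arcs_minimising
    {M : Type*} [MetricSpace M] [CompleteSpace M]
    (hmid : ∀ x y : M, ∃ z : M, dist x z = dist x y / 2 ∧ dist z y = dist x y / 2)
    (L : ℝ) (hL : 0 < L)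
    (γ : ℝ → M)
    (hper : ∀ s, γ (s + L) = γ s)
    (hlip : LipschitzWith 1 γ)
    (hdiam : Metric.diam (Set.range γ) = L / 2) :
    ∃ s : ℝ, dist (γ s) (γ (s + L / 2)) = L / 2 ∧
      (∀ t u : ℝ, s ≤ t → t ≤ u → u ≤ s + L / 2 → dist (γ t) (γ u) = u - t) ∧
      (∀ t u : ℝ, s + L / 2 ≤ t → t ≤ u → u ≤ s + L → dist (γ t) (γ u) = u - t) :=
  diam_eq_half_length_arcs_minimising_general L hL γ hper hlip hdiam
end

section
/- Let f : [0,a] → ℝ be continuous and θ > 0. Suppose that for every t₀ ∈ [0,a) there exists a function ĥ : [0,ε) → ℝ, differentiable at 0, with ĥ(0) = f(t₀), ĥ(s) ≥ f(t₀ + s) for small s ≥ 0, and ĥ'(0) ≤ −θ (f admits upper support functions with derivative ≤ −θ). Then f(t) ≤ f(0) − θ t for all t ∈ [0,a]. -/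
/-!
By the right-sided comparison principle for continuous functions against the line
`t ↦ f 0 - θ t`, it suffices that the lower right Dini derivative of `f` is at most `-θ` at every
`t₀ ∈ [0, a)`. Since the translate `ĥ (· - t₀)` lies above `f` and touches it at `t₀`, the right
difference quotients of `f` at `t₀` are bounded by those of `ĥ`, which tend to `ĥ'(0) ≤ -θ`.
-/

open Set Filter Topology

theorem HasDerivWithinAt.eventually_slope_lt_of_eventuallyLE {f g : ℝ → ℝ} {x d r : ℝ}
    (hg : HasDerivWithinAt g d (Ici x) x) (hgx : g x = f x) (hfg : f ≤ᶠ[𝓝[>] x] g)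
    (hr : d < r) : ∀ᶠ z in 𝓝[>] x, slope f x z < r := by
  filter_upwards [hg.Ioi_of_Ici.limsup_slope_le' (lt_irrefl x) hr, hfg, self_mem_nhdsWithin]
    with z hgz hfgz hxz
  calc slope f x z = (f z - f x) / (z - x) := slope_def_field f x z
    _ ≤ (g z - g x) / (z - x) := by
      gcongr
      · exact sub_nonneg.mpr (mem_Ioi.mp hxz).le
      · linarith
    _ = slope g x z := (slope_def_field g x z).symm
    _ < r := hgz

theorem HasDerivWithinAt.comp_sub_const_Ici {h : ℝ → ℝ} {d : ℝ}
    (hh : HasDerivWithinAt h d (Ici 0) 0) (x : ℝ) :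
    HasDerivWithinAt (fun z => h (z - x)) d (Ici x) x := by
  have hshift : HasDerivWithinAt (fun z : ℝ => z - x) 1 (Ici x) x :=
    (hasDerivWithinAt_id x _).sub_const x
  simpa [Function.comp_def] using
    hh.comp_of_eq x hshift (fun z hz => sub_nonneg.mpr (mem_Ici.mp hz)) (sub_self x).symm

theorem support_function_decay_general
    (a θ : ℝ)
    (f : ℝ → ℝ)
    (hf : ContinuousOn f (Set.Icc 0 a))
    (hsupp : ∀ t₀ ∈ Set.Ico 0 a, ∃ ε > (0:ℝ), ∃ h : ℝ → ℝ, ∃ d : ℝ,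
      h 0 = f t₀ ∧
      (∀ s ∈ Set.Ico (0:ℝ) ε, f (t₀ + s) ≤ h s) ∧
      HasDerivWithinAt h d (Set.Ici 0) 0 ∧
      d ≤ -θ) :
    ∀ t ∈ Set.Icc 0 a, f t ≤ f 0 - θ * t := by
  have hline : ∀ x, HasDerivWithinAt (fun t => f 0 - θ * t) (-θ) (Ici x) x := fun x => by
    simpa using ((hasDerivWithinAt_id x (Ici x)).const_mul θ).const_sub (f 0)
  have hdini : ∀ x ∈ Ico 0 a, ∀ r, -θ < r → ∃ᶠ z in 𝓝[>] x, slope f x z < r := by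
    intro x hx r hr
    obtain ⟨ε, hε, h, d, h0, hle, hder, hdθ⟩ := hsupp x hx
    have hfh : f ≤ᶠ[𝓝[>] x] fun z => h (z - x) := by
      filter_upwards [Ioo_mem_nhdsGT (lt_add_of_pos_right x hε)] with z hz
      simpa using hle (z - x) ⟨by linarith [hz.1], by linarith [hz.2]⟩
    exact ((hder.comp_sub_const_Ici x).eventually_slope_lt_of_eventuallyLE (by simpa using h0)
      hfh (hdθ.trans_lt hr)).frequently
  intro t ht
  simpa using image_le_of_liminf_slope_right_le_deriv_boundary hf (by simp) (by fun_prop)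
    (fun x _ => hline x) hdini ht

/-- Support-function comparison: if the continuous function f : [0,a] → ℝ admits at
every t₀ ∈ [0,a) an upper support function differentiable from the right at 0 with
derivative ≤ −θ, then f(t) ≤ f(0) − θ t on [0,a]. -/
theorem support_function_decay
    (a θ : ℝ) (hθ : 0 < θ)
    (f : ℝ → ℝ)
    (hf : ContinuousOn f (Set.Icc 0 a))
    (hsupp : ∀ t₀ ∈ Set.Ico 0 a, ∃ ε > (0:ℝ), ∃ h : ℝ → ℝ, ∃ d : ℝ,
      h 0 = f t₀ ∧
      (∀ s ∈ Set.Ico (0:ℝ) ε, f (t₀ + s) ≤ h s) ∧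
      HasDerivWithinAt h d (Set.Ici 0) 0 ∧
      d ≤ -θ) :
    ∀ t ∈ Set.Icc 0 a, f t ≤ f 0 - θ * t :=
  support_function_decay_general a θ f hf hsupp
end

section
/- Let {p_t, q_t}, t ∈ [0,1], be a sweepout of an embedded circle Γ in a metric space: continuous paths p, q : [0,1] → Γ with p₀ = q₀, p₁ = q₁, and a continuous family of closed arcs C_t ⊆ Γ with ∂C_t = {p_t, q_t}, C₀ a singleton and C₁ = Γ. Then there exists t₀ ∈ [0,1] such that p_{t₀} and q_{t₀} divide Γ into two arcs of equal length; consequently the width S(Γ) = inf over sweepouts of max_t d(p_t,q_t) is strictly positive. -/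
/-!
The length `b t - a t` of the arc runs continuously from `0` to `L`, so by the intermediate value
theorem it equals `L / 2` at some time `t₀`. The pair at that time is then an antipodal pair
`γ s, γ (s + L / 2)`. Injectivity on a period makes antipodal points distinct, and the distance
between them is a continuous `L`-periodic function of `s`, hence bounded below by some `δ > 0`.
So every sweepout has maximal distance at least `δ`, and so has their infimum.
-/

open Set Function

theorem Function.Periodic.map_toIcoMod {α β : Type*} [AddCommGroup α] [LinearOrder α]
    [IsOrderedAddMonoid α] [Archimedean α] {f : α → β} {c : α} (hf : Periodic f c) (hc : 0 < c)
    (a x : α) : f (toIcoMod hc a x) = f x :=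
  hf.sub_zsmul_eq _

theorem Function.Periodic.exists_zsmul_of_injOn {α β : Type*} [AddCommGroup α] [LinearOrder α]
    [IsOrderedAddMonoid α] [Archimedean α] {f : α → β} {c a x y : α} (hf : Periodic f c)
    (hc : 0 < c) (hinj : InjOn f (Ico a (a + c))) (hxy : f x = f y) :
    ∃ n : ℤ, y - x = n • c :=
  (toIcoMod_eq_toIcoMod hc).1 <| hinj (toIcoMod_mem_Ico hc a x) (toIcoMod_mem_Ico hc a y) <| by
    rw [hf.map_toIcoMod, hf.map_toIcoMod, hxy]

theorem Function.Periodic.exists_forall_le {α : Type*} [LinearOrder α] [TopologicalSpace α]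
    [ClosedIicTopology α] {f : ℝ → α} {c : ℝ} (hf : Periodic f c) (hc : c ≠ 0)
    (hcont : Continuous f) : ∃ x, ∀ y, f x ≤ f y := by
  obtain ⟨_, ⟨x, rfl⟩, hmin⟩ := (hf.compact_of_continuous hc hcont).exists_isLeast (range_nonempty f)
  exact ⟨x, fun y => hmin ⟨y, rfl⟩⟩

section Circle

variable {M : Type*} [MetricSpace M] {L : ℝ} {γ : ℝ → M}

theorem dist_add_half_period_pos (hper : Periodic γ L) (hL : 0 < L) (hinj : InjOn γ (Ico 0 L))
    (s : ℝ) : 0 < dist (γ s) (γ (s + L / 2)) := by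
  refine dist_pos.2 fun h => ?_
  obtain ⟨n, hn⟩ := hper.exists_zsmul_of_injOn hL (by rwa [zero_add]) h
  rw [add_sub_cancel_left, zsmul_eq_mul] at hn
  rcases le_or_gt n 0 with hn0 | hn1
  · have : (n : ℝ) ≤ 0 := by exact_mod_cast hn0
    nlinarith
  · have : (1 : ℝ) ≤ n := by exact_mod_cast hn1
    nlinarith

theorem exists_pos_forall_le_dist_add_half_period (hper : Periodic γ L) (hL : 0 < L)
    (hinj : InjOn γ (Ico 0 L)) (hcont : Continuous γ) :
    ∃ δ > 0, ∀ s, δ ≤ dist (γ s) (γ (s + L / 2)) := by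
  have hgap : Periodic (fun s => dist (γ s) (γ (s + L / 2))) L := fun s => by
    simp only [add_right_comm s L, hper s, hper (s + L / 2)]
  obtain ⟨s₀, hs₀⟩ := hgap.exists_forall_le hL.ne' (by fun_prop)
  exact ⟨_, dist_add_half_period_pos hper hL hinj s₀, hs₀⟩

theorem le_sSup_dist_of_sub_le (hlip : LipschitzWith 1 γ) {a b : ℝ → ℝ}
    (hab : ∀ t ∈ Icc (0 : ℝ) 1, a t ≤ b t ∧ b t - a t ≤ L) {t₀ : ℝ} (ht₀ : t₀ ∈ Icc (0 : ℝ) 1) :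
    dist (γ (a t₀)) (γ (b t₀)) ≤
      sSup {d : ℝ | ∃ t ∈ Icc (0 : ℝ) 1, d = dist (γ (a t)) (γ (b t))} := by
  refine le_csSup ⟨L, ?_⟩ ⟨t₀, ht₀, rfl⟩
  rintro _ ⟨t, ht, rfl⟩
  have hlen : dist (a t) (b t) ≤ L := by
    rw [Real.dist_eq, abs_sub_comm, abs_of_nonneg (sub_nonneg.2 (hab t ht).1)]
    exact (hab t ht).2
  simpa using hlip.dist_le_mul_of_le hlen

end Circle

theorem exists_sub_eq_of_continuousOn {a b : ℝ → ℝ} {L c : ℝ} (ha : ContinuousOn a (Icc 0 1))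
    (hb : ContinuousOn b (Icc 0 1)) (h0 : a 0 = b 0) (h1 : b 1 = a 1 + L) (hc : c ∈ Icc 0 L) :
    ∃ t ∈ Icc (0 : ℝ) 1, b t - a t = c :=
  intermediate_value_Icc zero_le_one (hb.sub ha) (by simpa [h0, h1] using hc)

/-- Sweepouts of an embedded circle Γ of length L (parametrized by arclength as an
L-periodic, 1-Lipschitz map γ : ℝ → M, injective on a period). A sweepout is encoded by
continuous parameter functions a, b : [0,1] → ℝ with a 0 = b 0 (the initial singleton
arc), b 1 = a 1 + L (the final arc is all of Γ), with the arc from a t to b t of length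
b t − a t ∈ [0, L]. Every sweepout contains a pair dividing Γ into two arcs of equal
length L/2; consequently the width S(Γ), the infimum over sweepouts of the maximal
distance between the pair of points, is strictly positive. -/
theorem sweepout_half_dividing_and_width_pos
    {M : Type*} [MetricSpace M] (L : ℝ) (hL : 0 < L)
    (γ : ℝ → M)
    (hper : ∀ s, γ (s + L) = γ s)
    (hlip : LipschitzWith 1 γ)
    (hinj : ∀ s ∈ Set.Ico (0:ℝ) L, ∀ t ∈ Set.Ico (0:ℝ) L, γ s = γ t → s = t) :
    (∀ a b : ℝ → ℝ, ContinuousOn a (Set.Icc 0 1) → ContinuousOn b (Set.Icc 0 1) →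
      a 0 = b 0 → b 1 = a 1 + L →
      (∀ t ∈ Set.Icc (0:ℝ) 1, a t ≤ b t ∧ b t - a t ≤ L) →
      ∃ t₀ ∈ Set.Icc (0:ℝ) 1, b t₀ - a t₀ = L / 2) ∧
    0 < sInf {m : ℝ | ∃ a b : ℝ → ℝ,
      ContinuousOn a (Set.Icc 0 1) ∧ ContinuousOn b (Set.Icc 0 1) ∧
      a 0 = b 0 ∧ b 1 = a 1 + L ∧
      (∀ t ∈ Set.Icc (0:ℝ) 1, a t ≤ b t ∧ b t - a t ≤ L) ∧
      m = sSup {d : ℝ | ∃ t ∈ Set.Icc (0:ℝ) 1, d = dist (γ (a t)) (γ (b t))}} := by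
  have half : ∀ a b : ℝ → ℝ, ContinuousOn a (Icc 0 1) → ContinuousOn b (Icc 0 1) →
      a 0 = b 0 → b 1 = a 1 + L → ∃ t₀ ∈ Icc (0 : ℝ) 1, b t₀ - a t₀ = L / 2 :=
    fun a b ha hb h0 h1 => exists_sub_eq_of_continuousOn ha hb h0 h1 ⟨by positivity, by linarith⟩
  refine ⟨fun a b ha hb h0 h1 _ => half a b ha hb h0 h1, ?_⟩
  obtain ⟨δ, hδ, hδle⟩ := exists_pos_forall_le_dist_add_half_period hper hL
    (fun s hs t ht h => hinj s hs t ht h) hlip.continuous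
  have linear_sweepout : ∀ t ∈ Icc (0 : ℝ) 1, 0 ≤ t * L ∧ t * L - 0 ≤ L := fun t ht =>
    ⟨by nlinarith [ht.1], by nlinarith [ht.2]⟩
  refine hδ.trans_le (le_csInf ⟨_, fun _ => 0, fun t => t * L, continuousOn_const, by fun_prop,
    by simp, by simp, linear_sweepout, rfl⟩ ?_)
  rintro _ ⟨a, b, ha, hb, h0, h1, hab, rfl⟩
  obtain ⟨t₀, ht₀, hmid⟩ := half a b ha hb h0 h1
  calc δ ≤ dist (γ (a t₀)) (γ (a t₀ + L / 2)) := hδle _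
    _ = dist (γ (a t₀)) (γ (b t₀)) := by rw [← hmid, add_sub_cancel]
    _ ≤ _ := le_sSup_dist_of_sub_le hlip hab ht₀
end
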